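/- Let (x_1,…,x_n) be a basis of Z^n and let 1 ≤ k < ℓ ≤ n. Set U_1 = span over R of (x_1,…,x_n) with x_ℓ omitted and U_2 = span over R of (x_1,…,x_n) with x_k omitted. Then dist(U_1,U_2) equals ‖x_1∧⋯∧(x_k, x_ℓ omitted)∧⋯∧x_n‖ divided by the product ‖x_1∧⋯∧(x_k omitted)∧⋯∧x_n‖ · ‖x_1∧⋯∧(x_ℓ omitted)∧⋯∧x_n‖. -/

import Mathlib

open scoped BigOperators

noncomputable def projDist {n : ℕ} (x y : EuclideanSpace ℝ (Fin n)) : ℝ :=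
  Real.sqrt (‖x‖^2 * ‖y‖^2 - (inner ℝ x y : ℝ)^2) / (‖x‖ * ‖y‖)

noncomputable def distToSub {n : ℕ} (x : EuclideanSpace ℝ (Fin n))
    (V : Submodule ℝ (EuclideanSpace ℝ (Fin n))) : ℝ :=
  ‖(Submodule.orthogonalProjectionOnto Vᗮ x : EuclideanSpace ℝ (Fin n))‖ / ‖x‖

noncomputable def subDist {n : ℕ} (W V : Submodule ℝ (EuclideanSpace ℝ (Fin n))) : ℝ :=
  sSup {d : ℝ | ∃ x ∈ W, x ≠ 0 ∧ d = distToSub x V}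

noncomputable def gramVol {n : ℕ} {ι : Type*} [Fintype ι] [DecidableEq ι]
    (v : ι → EuclideanSpace ℝ (Fin n)) : ℝ :=
  Real.sqrt (Matrix.det (Matrix.of fun i j => (inner ℝ (v i) (v j) : ℝ)))

noncomputable def Theta {n : ℕ} {ι : Type*} [Fintype ι] [DecidableEq ι]
    (v : ι → EuclideanSpace ℝ (Fin n)) : ℝ :=
  gramVol v / ∏ i, ‖v i‖

def IsIntPt {n : ℕ} (x : EuclideanSpace ℝ (Fin n)) : Prop := ∀ i, ∃ k : ℤ, x i = (k : ℝ)

noncomputable def toE {n : ℕ} (x : Fin n → ℤ) : EuclideanSpace ℝ (Fin n) :=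
  (WithLp.equiv 2 (Fin n → ℝ)).symm (fun i => (x i : ℝ))

/-
Removing a vector `v i₀` from a family divides its Gram volume by the distance from `v i₀` to the
span of the others: one row operation on the Gram matrix makes it block triangular. A basis of
`ℤⁿ` has Gram volume `|det| = 1`.

Let `W` be the span of the `x i` with `i ≠ k, l`. Then `U₁ = W ⊔ ℝ x_k` and `W ≤ U₂`, so the
orthogonal projections onto `U₂ᗮ` and `Wᗮ` of a vector of `U₁` are the same multiples of those of
`x_k`; as projecting onto `Wᗮ` shortens vectors, the distance ratio to `U₂` is maximal at the
component of `x_k` orthogonal to `W`. Hence `dist(U₁, U₂) = ‖P_{U₂ᗮ} x_k‖ / ‖P_{Wᗮ} x_k‖`, and the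
volume identities give `‖P_{U₂ᗮ} x_k‖ = 1 / vol U₂` and `‖P_{Wᗮ} x_k‖ = vol U₁ / vol W`.
-/

open Matrix Submodule Set
open scoped InnerProductSpace

section Gram

variable {E : Type*} [NormedAddCommGroup E] [InnerProductSpace ℝ E] {ι : Type*} [Fintype ι]
  [DecidableEq ι]

theorem Matrix.det_gram_sum_elim (v : ι → E) (u : E) [(span ℝ (range v)).HasOrthogonalProjection] :
    (gram ℝ (Sum.elim v fun _ : Unit => u)).det =
      (gram ℝ v).det * ‖(span ℝ (range v))ᗮ.starProjection u‖ ^ 2 := by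
  set K := span ℝ (range v)
  set q := Kᗮ.starProjection u
  set w := Sum.elim v fun _ : Unit => u
  obtain ⟨c, hc⟩ := (mem_span_range_iff_exists_fun ℝ).mp (K.starProjection_apply_mem u)
  have hq : ∀ i, ⟪v i, q⟫_ℝ = 0 := fun i =>
    inner_right_of_mem_orthogonal (subset_span (mem_range_self i)) (Kᗮ.starProjection_apply_mem u)
  -- subtracting from the last row the rows of the `v i`, weighted by the coefficients of
  -- `K.starProjection u`, leaves the inner products with `q`
  have hrow : ∑ r, Sum.elim (-c) 1 r • gram ℝ w r = fun j => ⟪q, w j⟫_ℝ := by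
    ext j
    simp only [Finset.sum_apply, Pi.smul_apply, gram_apply, smul_eq_mul, Fintype.sum_sum_type,
      Sum.elim_inl, Sum.elim_inr, Pi.neg_apply, neg_mul, Finset.sum_neg_distrib, Finset.univ_unique,
      Pi.one_apply, one_mul, Finset.sum_const, Finset.card_singleton, one_smul, w, q,
      starProjection_orthogonal_val, ← hc, inner_sub_left, sum_inner, real_inner_smul_left]
    ring
  have hqu : ⟪q, u⟫_ℝ = ‖q‖ ^ 2 := by
    have hu : q + K.starProjection u = u := by simp [q]
    rw [← hu, inner_add_right, inner_left_of_mem_orthogonal (K.starProjection_apply_mem u)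
      (Kᗮ.starProjection_apply_mem u), add_zero, real_inner_self_eq_norm_sq]
  calc (gram ℝ w).det = ((gram ℝ w).updateRow (.inr ()) fun j => ⟪q, w j⟫_ℝ).det := by
        rw [← hrow, det_updateRow_sum]; simp
    _ = (fromBlocks (gram ℝ v) (of fun i _ => ⟪v i, u⟫_ℝ) 0 (of fun _ _ => ‖q‖ ^ 2)).det := by
        congr 1
        ext (i | i) (j | j) <;> simp [w, real_inner_comm, hq, hqu]
    _ = _ := by rw [det_fromBlocks_zero₂₁, det_unique (of _)]; rfl

end Gram

section GramVol

variable {n : ℕ} {ι : Type*} [Fintype ι] [DecidableEq ι]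

theorem gramVol_comp_equiv {ι' : Type*} [Fintype ι'] [DecidableEq ι']
    (v : ι → EuclideanSpace ℝ (Fin n)) (e : ι' ≃ ι) : gramVol (v ∘ e) = gramVol v := by
  change √((gram ℝ v).submatrix e e).det = √(gram ℝ v).det
  rw [det_submatrix_equiv_self]

theorem gramVol_eq_mul_norm_starProjection (v : ι → EuclideanSpace ℝ (Fin n)) (i₀ : ι) :
    gramVol v = gramVol (fun i : {i // i ≠ i₀} => v i) *
      ‖(span ℝ (v '' {i | i ≠ i₀}))ᗮ.starProjection (v i₀)‖ := by
  let e : {i // i ≠ i₀} ⊕ Unit ≃ ι :=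
    (Equiv.optionEquivSumPUnit _).symm.trans (Equiv.optionSubtypeNe i₀)
  have hv : v ∘ e = Sum.elim (fun i : {i // i ≠ i₀} => v i) fun _ => v i₀ := by
    ext (i | i) <;> rfl
  have hspan : v '' {i | i ≠ i₀} = range fun i : {i // i ≠ i₀} => v i := by
    ext; simp
  rw [← gramVol_comp_equiv v e, hv, gramVol, ← gram, det_gram_sum_elim,
    Real.sqrt_mul (posSemidef_gram ℝ _).det_nonneg, Real.sqrt_sq (norm_nonneg _), hspan]
  rfl

theorem gramVol_subtype_eq_mul_norm_starProjection {p : ι → Prop} [DecidablePred p]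
    (v : ι → EuclideanSpace ℝ (Fin n)) {i₀ : ι} (hi₀ : p i₀) :
    gramVol (fun i : {i // p i} => v i) = gramVol (fun i : {i // i ≠ i₀ ∧ p i} => v i) *
      ‖(span ℝ (v '' {i | i ≠ i₀ ∧ p i}))ᗮ.starProjection (v i₀)‖ := by
  let e : {i // i ≠ i₀ ∧ p i} ≃ {j : {i // p i} // j ≠ ⟨i₀, hi₀⟩} :=
    { toFun i := ⟨⟨i, i.2.2⟩, fun h => i.2.1 (congrArg Subtype.val h)⟩
      invFun j := ⟨j.1, fun h => j.2 (Subtype.ext h), j.1.2⟩ }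
  have himage : (fun i : {i // p i} => v i) '' {j | j ≠ ⟨i₀, hi₀⟩} = v '' {i | i ≠ i₀ ∧ p i} := by
    ext; simp [and_left_comm, and_assoc]
  rw [gramVol_eq_mul_norm_starProjection _ ⟨i₀, hi₀⟩, ← gramVol_comp_equiv _ e, himage]
  rfl

theorem gramVol_eq_abs_det (v : Fin n → EuclideanSpace ℝ (Fin n)) :
    gramVol v = |(of fun i j => v i j).det| := by
  have hm : (of fun i j => (EuclideanSpace.basisFun (Fin n) ℝ).repr (v j) i) =
      (of fun i j => v i j)ᵀ := by
    ext; simp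
  rw [gramVol, ← gram, gram_eq_conjTranspose_mul (EuclideanSpace.basisFun (Fin n) ℝ), hm, det_mul,
    det_conjTranspose, star_trivial, det_transpose, Real.sqrt_mul_self_eq_abs]

theorem gramVol_toE_eq_one {x : Fin n → Fin n → ℤ} (hx : IsUnit (of x)) :
    gramVol (fun i => toE (x i)) = 1 := by
  have hdet : (of fun i j => toE (x i) j).det = (of x).det :=
    ((Int.castRingHom ℝ).map_det (of x)).symm
  rw [gramVol_eq_abs_det, hdet, ← Int.cast_abs, Int.isUnit_iff_abs_eq.mp
    ((isUnit_iff_isUnit_det _).mp hx), Int.cast_one]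

end GramVol

section Distance

variable {n : ℕ}

theorem distToSub_eq (x : EuclideanSpace ℝ (Fin n)) (V : Submodule ℝ (EuclideanSpace ℝ (Fin n))) :
    distToSub x V = ‖Vᗮ.starProjection x‖ / ‖x‖ :=
  rfl

theorem subDist_sup_span_singleton {W V : Submodule ℝ (EuclideanSpace ℝ (Fin n))} (hWV : W ≤ V)
    {u : EuclideanSpace ℝ (Fin n)} (hu : u ∉ W) :
    subDist (W ⊔ span ℝ {u}) V = ‖Vᗮ.starProjection u‖ / ‖Wᗮ.starProjection u‖ := by
  have hproj : ∀ y ∈ W ⊔ span ℝ {u}, ∃ t : ℝ, Vᗮ.starProjection y = t • Vᗮ.starProjection u ∧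
      Wᗮ.starProjection y = t • Wᗮ.starProjection u := by
    intro y hy
    obtain ⟨w, hw, z, hz, rfl⟩ := mem_sup.mp hy
    obtain ⟨t, rfl⟩ := mem_span_singleton.mp hz
    refine ⟨t, ?_, ?_⟩ <;> rw [map_add, map_smul, starProjection_orthogonal_apply_eq_zero, zero_add]
    exacts [hWV hw, hw]
  have hWu : Wᗮ.starProjection u ≠ 0 := by
    rwa [Ne, starProjection_orthogonal_val, sub_eq_zero, eq_comm, starProjection_eq_self_iff]
  have hmem : Wᗮ.starProjection u ∈ W ⊔ span ℝ {u} := by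
    rw [starProjection_orthogonal_val]
    exact sub_mem (mem_sup_right (mem_span_singleton_self u))
      (mem_sup_left (W.starProjection_apply_mem u))
  refine IsGreatest.csSup_eq ⟨⟨_, hmem, hWu, ?_⟩, ?_⟩
  · rw [distToSub_eq, starProjection_orthogonal_val (K := W), map_sub,
      starProjection_orthogonal_apply_eq_zero (hWV (W.starProjection_apply_mem u)), sub_zero]
  · rintro _ ⟨y, hy, -, rfl⟩
    obtain ⟨t, hV, hW⟩ := hproj y hy
    rw [distToSub_eq, hV]
    rcases eq_or_ne t 0 with rfl | ht
    · simp only [zero_smul, norm_zero, zero_div]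
      positivity
    calc ‖t • Vᗮ.starProjection u‖ / ‖y‖
        ≤ ‖t • Vᗮ.starProjection u‖ / ‖t • Wᗮ.starProjection u‖ :=
          div_le_div_of_nonneg_left (norm_nonneg _) (norm_pos_iff.mpr (smul_ne_zero ht hWu))
            (hW ▸ Wᗮ.norm_starProjection_apply_le y)
      _ = ‖Vᗮ.starProjection u‖ / ‖Wᗮ.starProjection u‖ := by
          rw [norm_smul, norm_smul, mul_div_mul_left _ _ (norm_ne_zero_iff.mpr ht)]

end Distance

theorem stmt15 {n : ℕ} (x : Fin n → Fin n → ℤ)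
    (hbasis : ∀ y : Fin n → ℤ, ∃ c : Fin n → ℤ, ∀ i, y i = ∑ j, c j * x j i)
    (k l : Fin n) (hkl : k < l) :
    subDist (Submodule.span ℝ ((fun i => toE (x i)) '' {i : Fin n | i ≠ l}))
        (Submodule.span ℝ ((fun i => toE (x i)) '' {i : Fin n | i ≠ k})) =
      gramVol (fun i : {i : Fin n // i ≠ k ∧ i ≠ l} => toE (x i)) /
        (gramVol (fun i : {i : Fin n // i ≠ k} => toE (x i)) *
         gramVol (fun i : {i : Fin n // i ≠ l} => toE (x i))) := by
  have hone : gramVol (fun i => toE (x i)) = 1 := gramVol_toE_eq_one <|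
    vecMul_surjective_iff_isUnit.mp fun y => (hbasis y).imp fun _ hc => funext fun i => (hc i).symm
  have hk := gramVol_eq_mul_norm_starProjection (fun i => toE (x i)) k
  have hl := gramVol_eq_mul_norm_starProjection (fun i => toE (x i)) l
  have hlk := gramVol_subtype_eq_mul_norm_starProjection (p := (· ≠ l)) (fun i => toE (x i)) hkl.ne
  set W := span ℝ ((fun i => toE (x i)) '' {i | i ≠ k ∧ i ≠ l})
  rw [hone] at hk hl
  have hVl := left_ne_zero_of_mul_eq_one hl.symm
  have hVkl := left_ne_zero_of_mul (hlk ▸ hVl)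
  have hxk : toE (x k) ∉ W := fun h =>
    right_ne_zero_of_mul (hlk ▸ hVl) (by rw [starProjection_orthogonal_apply_eq_zero h, norm_zero])
  have hWU2 : W ≤ span ℝ ((fun i => toE (x i)) '' {i | i ≠ k}) :=
    span_mono (image_mono fun _ hi => hi.1)
  have hU1 : span ℝ ((fun i => toE (x i)) '' {i | i ≠ l}) = W ⊔ span ℝ {toE (x k)} := by
    have : {i | i ≠ l} = insert k {i | i ≠ k ∧ i ≠ l} := by
      ext i; rcases eq_or_ne i k with rfl | h <;> simp [*, hkl.ne]
    rw [this, image_insert_eq, span_insert, sup_comm]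
  have hdk := eq_div_of_mul_eq (left_ne_zero_of_mul_eq_one hk.symm) ((mul_comm _ _).trans hk.symm)
  have hdkl := eq_div_of_mul_eq hVkl ((mul_comm _ _).trans hlk.symm)
  rw [hU1, subDist_sup_span_singleton hWU2 hxk, hdk, hdkl]
  field_simp
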